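/- Let G be an unmixed graph with distinct minimal vertex covers C₁ and C₂, and let G' = G[C₁ △ C₂] be the induced subgraph on the symmetric difference. Then: (a) for every vertex cover C' of G', the set C' ∪ (C₁ ∩ C₂) is a vertex cover of G; (b) G' is a bipartite graph with bipartition (C₁ \ C₂, C₂ \ C₁), it has a perfect matching, and |C₁ \ C₂| = |C₂ \ C₁| = α₀(G'). -/
import Mathlib


/-- `C` is a vertex cover of `G`: every edge of `G` meets `C`. -/
def IsVC {V : Type*} (G : SimpleGraph V) (C : Finset V) : Prop :=
  ∀ ⦃u v : V⦄, G.Adj u v → u ∈ C ∨ v ∈ C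

/-- `C` is a minimal vertex cover of `G`. -/
def IsMinVC {V : Type*} (G : SimpleGraph V) (C : Finset V) : Prop :=
  IsVC G C ∧ ∀ D ⊆ C, IsVC G D → D = C

/-- `C'` is a vertex cover of the induced subgraph `G[Δ]`. -/
def IsVCOn {V : Type*} (G : SimpleGraph V) (Δ C' : Finset V) : Prop :=
  ∀ ⦃u v : V⦄, G.Adj u v → u ∈ Δ → v ∈ Δ → u ∈ C' ∨ v ∈ C'

/-- Every vertex cover contains a minimal vertex cover. -/
lemma exists_minVC_subset {V : Type*} [DecidableEq V] (G : SimpleGraph V) :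
    ∀ C : Finset V, IsVC G C → ∃ D, D ⊆ C ∧ IsMinVC G D := by
  intro C
  induction C using Finset.strongInductionOn with
  | _ C ih =>
    intro hC
    by_cases h : ∀ D ⊆ C, IsVC G D → D = C
    · exact ⟨C, subset_rfl, hC, h⟩
    · push_neg at h
      obtain ⟨D, hDC, hD, hne⟩ := h
      obtain ⟨E, hE1, hE2⟩ := ih D (hDC.ssubset_of_ne hne) hD
      exact ⟨E, hE1.trans hDC, hE2⟩

/-- Hall-type lemma: in an unmixed graph, there is an injective map from `C₁ \ C₂`
to neighbours in `C₂ \ C₁`. -/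
lemma exists_inj_matching {V : Type*} [Fintype V] [DecidableEq V] (G : SimpleGraph V)
    (hunmixed : ∀ C D : Finset V, IsMinVC G C → IsMinVC G D → C.card = D.card)
    (C₁ C₂ : Finset V) (h1 : IsMinVC G C₁) (h2 : IsMinVC G C₂) :
    ∃ f : {x // x ∈ C₁ \ C₂} → V, Function.Injective f ∧
      ∀ x, f x ∈ C₂ \ C₁ ∧ G.Adj x.1 (f x) := by
  classical
  set t : {x // x ∈ C₁ \ C₂} → Finset V :=
    fun x => (C₂ \ C₁).filter (fun v => G.Adj x.1 v) with ht
  have hall : ∀ s : Finset {x // x ∈ C₁ \ C₂}, s.card ≤ (s.biUnion t).card := by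
    intro s
    by_contra hlt
    push_neg at hlt
    set A : Finset V := s.image Subtype.val with hA
    have hAcard : A.card = s.card := Finset.card_image_of_injective _ Subtype.val_injective
    have hAsub : A ⊆ C₁ \ C₂ := by
      intro a ha
      obtain ⟨x, _, rfl⟩ := Finset.mem_image.mp ha
      exact x.2
    set N : Finset V := s.biUnion t with hN
    set C : Finset V := (C₁ \ A) ∪ N with hC
    -- C is a vertex cover of G
    have key : ∀ u v : V, G.Adj u v → u ∈ C₁ → u ∈ C ∨ v ∈ C := by
      intro u v huv hu
      by_cases huA : u ∈ A
      · have huC₁C₂ : u ∈ C₁ \ C₂ := hAsub huA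
        have huC₂ : u ∉ C₂ := (Finset.mem_sdiff.mp huC₁C₂).2
        have hvC₂ : v ∈ C₂ := by
          rcases h2.1 huv with h | h
          · exact absurd h huC₂
          · exact h
        by_cases hvC₁ : v ∈ C₁
        · right
          apply Finset.mem_union_left
          refine Finset.mem_sdiff.mpr ⟨hvC₁, fun hvA => ?_⟩
          exact (Finset.mem_sdiff.mp (hAsub hvA)).2 hvC₂
        · right
          apply Finset.mem_union_right
          obtain ⟨x, hxs, hxu⟩ := Finset.mem_image.mp huA
          refine Finset.mem_biUnion.mpr ⟨x, hxs, ?_⟩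
          refine Finset.mem_filter.mpr ⟨Finset.mem_sdiff.mpr ⟨hvC₂, hvC₁⟩, ?_⟩
          rw [hxu]; exact huv
      · exact Or.inl (Finset.mem_union_left _ (Finset.mem_sdiff.mpr ⟨hu, huA⟩))
    have hCvc : IsVC G C := by
      intro u v huv
      rcases h1.1 huv with h | h
      · exact key u v huv h
      · exact (key v u huv.symm h).symm
    obtain ⟨D, hDsub, hDmin⟩ := exists_minVC_subset G C hCvc
    have hDcard : D.card = C₁.card := hunmixed D C₁ hDmin h1
    have hC1A : (C₁ \ A).card = C₁.card - A.card :=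
      Finset.card_sdiff_of_subset (hAsub.trans Finset.sdiff_subset)
    have hAle : A.card ≤ C₁.card :=
      Finset.card_le_card (hAsub.trans Finset.sdiff_subset)
    have hCle : C.card ≤ (C₁ \ A).card + N.card := Finset.card_union_le _ _
    have hDle : D.card ≤ C.card := Finset.card_le_card hDsub
    omega
  obtain ⟨f, hfinj, hf⟩ := (Finset.all_card_le_biUnion_card_iff_exists_injective t).mp hall
  refine ⟨f, hfinj, fun x => ?_⟩
  have := hf x
  rw [ht] at this
  simp only [Finset.mem_filter] at this
  exact this

theorem symmDiff_induced_subgraph_properties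
    {V : Type*} [Fintype V] [DecidableEq V] (G : SimpleGraph V)
    (hunmixed : ∀ C D : Finset V, IsMinVC G C → IsMinVC G D → C.card = D.card)
    (C₁ C₂ : Finset V) (h1 : IsMinVC G C₁) (h2 : IsMinVC G C₂) (hne : C₁ ≠ C₂)
    (Δ : Finset V) (hΔ : Δ = (C₁ \ C₂) ∪ (C₂ \ C₁)) :
    -- (a) covers of G[Δ] extend to covers of G
    (∀ C' : Finset V, IsVCOn G Δ C' → IsVC G (C' ∪ (C₁ ∩ C₂))) ∧
    -- (b) G[Δ] is bipartite with bipartition (C₁ \ C₂, C₂ \ C₁)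
    (∀ u ∈ C₁ \ C₂, ∀ v ∈ C₁ \ C₂, ¬ G.Adj u v) ∧
    (∀ u ∈ C₂ \ C₁, ∀ v ∈ C₂ \ C₁, ¬ G.Adj u v) ∧
    -- G[Δ] has a perfect matching
    (∃ f : V → V, ∀ v ∈ Δ, f v ∈ Δ ∧ G.Adj v (f v) ∧ f (f v) = v) ∧
    -- |C₁ \ C₂| = |C₂ \ C₁| = α₀(G[Δ])
    (C₁ \ C₂).card = (C₂ \ C₁).card ∧
    IsVCOn G Δ (C₁ \ C₂) ∧
    (∀ C' : Finset V, C' ⊆ Δ → IsVCOn G Δ C' → (C₁ \ C₂).card ≤ C'.card) := by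
  classical
  -- (b) bipartite parts have no internal edges
  have bip1 : ∀ u ∈ C₁ \ C₂, ∀ v ∈ C₁ \ C₂, ¬ G.Adj u v := by
    intro u hu v hv hadj
    rcases h2.1 hadj with h | h
    · exact (Finset.mem_sdiff.mp hu).2 h
    · exact (Finset.mem_sdiff.mp hv).2 h
  have bip2 : ∀ u ∈ C₂ \ C₁, ∀ v ∈ C₂ \ C₁, ¬ G.Adj u v := by
    intro u hu v hv hadj
    rcases h1.1 hadj with h | h
    · exact (Finset.mem_sdiff.mp hu).2 h
    · exact (Finset.mem_sdiff.mp hv).2 h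
  -- (a)
  have parta : ∀ C' : Finset V, IsVCOn G Δ C' → IsVC G (C' ∪ (C₁ ∩ C₂)) := by
    intro C' hC' u v huv
    by_cases hu : u ∈ Δ
    · by_cases hv : v ∈ Δ
      · rcases hC' huv hu hv with h | h
        · exact Or.inl (Finset.mem_union_left _ h)
        · exact Or.inr (Finset.mem_union_left _ h)
      · -- v ∉ Δ : show v ∈ C₁ ∩ C₂ or u covers
        rw [hΔ] at hv
        simp only [Finset.mem_union, Finset.mem_sdiff, not_or, not_and, not_not] at hv
        by_cases hvC₁ : v ∈ C₁
        · exact Or.inr (Finset.mem_union_right _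
            (Finset.mem_inter.mpr ⟨hvC₁, hv.1 hvC₁⟩))
        · -- v ∉ C₁ and v ∉ C₂ (since v∉Δ): u must be in both
          have hvC₂ : v ∉ C₂ := fun h => hvC₁ (hv.2 h)
          have huC₁ : u ∈ C₁ := (h1.1 huv).resolve_right hvC₁
          have huC₂ : u ∈ C₂ := (h2.1 huv).resolve_right hvC₂
          exact Or.inl (Finset.mem_union_right _ (Finset.mem_inter.mpr ⟨huC₁, huC₂⟩))
    · rw [hΔ] at hu
      simp only [Finset.mem_union, Finset.mem_sdiff, not_or, not_and, not_not] at hu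
      by_cases huC₁ : u ∈ C₁
      · exact Or.inl (Finset.mem_union_right _
          (Finset.mem_inter.mpr ⟨huC₁, hu.1 huC₁⟩))
      · have huC₂ : u ∉ C₂ := fun h => huC₁ (hu.2 h)
        have hvC₁ : v ∈ C₁ := (h1.1 huv).resolve_left huC₁
        have hvC₂ : v ∈ C₂ := (h2.1 huv).resolve_left huC₂
        exact Or.inr (Finset.mem_union_right _ (Finset.mem_inter.mpr ⟨hvC₁, hvC₂⟩))
  -- injective matchings in both directions
  obtain ⟨f₁, hf₁inj, hf₁⟩ := exists_inj_matching G hunmixed C₁ C₂ h1 h2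
  obtain ⟨f₂, hf₂inj, hf₂⟩ := exists_inj_matching G hunmixed C₂ C₁ h2 h1
  -- cardinality equality
  have hcard12 : (C₁ \ C₂).card ≤ (C₂ \ C₁).card := by
    have : Function.Injective (fun x : {x // x ∈ C₁ \ C₂} =>
        (⟨f₁ x, (hf₁ x).1⟩ : {y // y ∈ C₂ \ C₁})) := by
      intro a b hab
      exact hf₁inj (congrArg Subtype.val hab)
    calc (C₁ \ C₂).card = Fintype.card {x // x ∈ C₁ \ C₂} := (Fintype.card_coe _).symm
      _ ≤ Fintype.card {y // y ∈ C₂ \ C₁} := Fintype.card_le_of_injective _ this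
      _ = (C₂ \ C₁).card := Fintype.card_coe _
  have hcard21 : (C₂ \ C₁).card ≤ (C₁ \ C₂).card := by
    have : Function.Injective (fun x : {x // x ∈ C₂ \ C₁} =>
        (⟨f₂ x, (hf₂ x).1⟩ : {y // y ∈ C₁ \ C₂})) := by
      intro a b hab
      exact hf₂inj (congrArg Subtype.val hab)
    calc (C₂ \ C₁).card = Fintype.card {x // x ∈ C₂ \ C₁} := (Fintype.card_coe _).symm
      _ ≤ Fintype.card {y // y ∈ C₁ \ C₂} := Fintype.card_le_of_injective _ this
      _ = (C₁ \ C₂).card := Fintype.card_coe _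
  have hcardeq : (C₁ \ C₂).card = (C₂ \ C₁).card := le_antisymm hcard12 hcard21
  -- build equivalence from f₁
  set g : {x // x ∈ C₁ \ C₂} → {y // y ∈ C₂ \ C₁} :=
    fun x => ⟨f₁ x, (hf₁ x).1⟩ with hg
  have hginj : Function.Injective g := by
    intro a b hab
    exact hf₁inj (congrArg Subtype.val hab)
  have hgbij : Function.Bijective g := by
    rw [Fintype.bijective_iff_injective_and_card]
    refine ⟨hginj, ?_⟩
    rw [Fintype.card_coe, Fintype.card_coe]
    exact hcardeq
  set e : {x // x ∈ C₁ \ C₂} ≃ {y // y ∈ C₂ \ C₁} := Equiv.ofBijective g hgbij with he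
  have hecoe : ∀ x, (e x : V) = f₁ x := fun x => rfl
  -- disjointness of the two parts
  have hdisj1 : ∀ v ∈ C₂ \ C₁, v ∉ C₁ \ C₂ := by
    intro v hv hv'
    exact (Finset.mem_sdiff.mp hv).2 (Finset.mem_sdiff.mp hv').1
  -- the matching function
  set f : V → V := fun v =>
    if h : v ∈ C₁ \ C₂ then (e ⟨v, h⟩ : V)
    else if h2 : v ∈ C₂ \ C₁ then (e.symm ⟨v, h2⟩ : V) else v with hf
  have hmatch : ∀ v ∈ Δ, f v ∈ Δ ∧ G.Adj v (f v) ∧ f (f v) = v := by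
    intro v hv
    rw [hΔ] at hv
    rcases Finset.mem_union.mp hv with hv1 | hv2
    · have hfv : f v = (e ⟨v, hv1⟩ : V) := by rw [hf]; simp [hv1]
      have hmem : (e ⟨v, hv1⟩ : V) ∈ C₂ \ C₁ := (e ⟨v, hv1⟩).2
      refine ⟨?_, ?_, ?_⟩
      · rw [hfv, hΔ]; exact Finset.mem_union_right _ hmem
      · rw [hfv, hecoe]; exact (hf₁ ⟨v, hv1⟩).2
      · rw [hfv]
        have h1' : (e ⟨v, hv1⟩ : V) ∉ C₁ \ C₂ := hdisj1 _ hmem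
        have : f (e ⟨v, hv1⟩ : V) = (e.symm ⟨(e ⟨v, hv1⟩ : V), hmem⟩ : V) := by
          rw [hf]; simp [h1', hmem]
        rw [this]
        have : (⟨(e ⟨v, hv1⟩ : V), hmem⟩ : {y // y ∈ C₂ \ C₁}) = e ⟨v, hv1⟩ :=
          Subtype.ext rfl
        rw [this, Equiv.symm_apply_apply]
    · have hv1' : v ∉ C₁ \ C₂ := hdisj1 _ hv2
      have hfv : f v = (e.symm ⟨v, hv2⟩ : V) := by rw [hf]; simp [hv1', hv2]
      have hmem : (e.symm ⟨v, hv2⟩ : V) ∈ C₁ \ C₂ := (e.symm ⟨v, hv2⟩).2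
      refine ⟨?_, ?_, ?_⟩
      · rw [hfv, hΔ]; exact Finset.mem_union_left _ hmem
      · rw [hfv]
        have := (hf₁ (e.symm ⟨v, hv2⟩)).2
        rw [← hecoe, Equiv.apply_symm_apply] at this
        exact this.symm
      · rw [hfv]
        have : f (e.symm ⟨v, hv2⟩ : V) = (e ⟨(e.symm ⟨v, hv2⟩ : V), hmem⟩ : V) := by
          rw [hf]; simp [hmem]
        rw [this]
        have : (⟨(e.symm ⟨v, hv2⟩ : V), hmem⟩ : {x // x ∈ C₁ \ C₂}) = e.symm ⟨v, hv2⟩ :=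
          Subtype.ext rfl
        rw [this, Equiv.apply_symm_apply]
  -- C₁ \ C₂ is a vertex cover of G[Δ]
  have hvcon : IsVCOn G Δ (C₁ \ C₂) := by
    intro u v huv hu hv
    rw [hΔ] at hu hv
    rcases Finset.mem_union.mp hu with h | h
    · exact Or.inl h
    · rcases Finset.mem_union.mp hv with h' | h'
      · exact Or.inr h'
      · exact absurd huv (bip2 u h v h')
  -- minimality: any cover of G[Δ] has at least (C₁ \ C₂).card elements
  have hmin : ∀ C' : Finset V, C' ⊆ Δ → IsVCOn G Δ C' → (C₁ \ C₂).card ≤ C'.card := by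
    intro C' _ hC'
    -- map each x ∈ C₁ \ C₂ to a vertex of C' among {x, f x}
    have hsel : ∀ x : {x // x ∈ C₁ \ C₂}, ∃ w ∈ C', w = x.1 ∨ w = f x.1 := by
      intro x
      have hxΔ : x.1 ∈ Δ := by rw [hΔ]; exact Finset.mem_union_left _ x.2
      obtain ⟨hfΔ, hadj, _⟩ := hmatch x.1 hxΔ
      rcases hC' hadj hxΔ hfΔ with h | h
      · exact ⟨x.1, h, Or.inl rfl⟩
      · exact ⟨f x.1, h, Or.inr rfl⟩
    choose w hwC' hw using hsel
    have hfval : ∀ x : {x // x ∈ C₁ \ C₂}, f x.1 = (e x : V) := by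
      intro x
      rw [hf]; simp [x.2]
    have hwinj : Function.Injective w := by
      intro a b hab
      rcases hw a with ha | ha <;> rcases hw b with hb | hb
      · exact Subtype.ext (ha ▸ hb ▸ hab)
      · -- w a = a.1 ∈ C₁\C₂, w b = f b.1 ∈ C₂\C₁ : impossible equal
        exfalso
        rw [ha, hb, hfval b] at hab
        exact hdisj1 _ (e b).2 (hab ▸ a.2)
      · exfalso
        rw [ha, hb, hfval a] at hab
        exact hdisj1 _ (e a).2 (hab ▸ b.2)
      · rw [ha, hb, hfval a, hfval b] at hab
        exact e.injective (Subtype.ext hab)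
    calc (C₁ \ C₂).card = Fintype.card {x // x ∈ C₁ \ C₂} := (Fintype.card_coe _).symm
      _ ≤ Fintype.card {y // y ∈ C'} := Fintype.card_le_of_injective
          (fun x => ⟨w x, hwC' x⟩) (fun a b hab => hwinj (congrArg Subtype.val hab))
      _ = C'.card := Fintype.card_coe _
  exact ⟨parta, bip1, bip2, ⟨f, hmatch⟩, hcardeq, hvcon, hmin⟩
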